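/- Let X be a compact Hausdorff space, E a Banach space over 𝕂 ∈ {ℝ, ℂ}, and A a closed 𝕂-linear subspace of C(X,E). Then every strong boundary point of A is a Bishop point of A, i.e., Θ(A) ⊆ Ω(A). -/

import Mathlib

/-!
Let `f ∈ A` vanish at `x ∈ Θ(A)` and put `φ = ‖f(·)‖ / (‖f‖_∞ + 1)`, so that `φ ≤ 1` and
`φ x = 0`. Peaking at `x` off the neighbourhoods `{φ < 2⁻ⁿ⁻¹}` gives `Gₙ ∈ S(A)` with `Gₙ x = u`
and `‖Gₙ y‖ < 1/2` wherever `φ y ≥ 2⁻ⁿ⁻¹`. As `A` is closed, `g = ∑ 2⁻ⁿ⁻¹ Gₙ` lies in `A`, and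
`g x = u`. If `2⁻ᵐ⁻¹ < φ y ≤ 2⁻ᵐ`, the `m`-th term loses at least half its weight, so
`‖g y‖ ≤ 1 - 2⁻ᵐ⁻² ≤ 1 - φ y / 4`. Hence, with `s = 4 (‖f‖_∞ + 1)`, both `g` and `h = g - s⁻¹ f`
lie in `V^A_{x,{u}}`, and `f = s (g - h)`.
-/

open Set Metric

variable {𝕂 : Type*} [RCLike 𝕂]
variable {X : Type*} [TopologicalSpace X] [CompactSpace X] [T2Space X]
variable {E : Type*} [NormedAddCommGroup E] [NormedSpace ℝ E] [NormedSpace 𝕂 E]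
  [IsScalarTower ℝ 𝕂 E] [CompleteSpace E]

/-- The set `V^A_{x,K} = {f ∈ S(A) : f(x) ∈ K}`. -/
def Vset (A : Subspace 𝕂 C(X, E)) (x : X) (K : Set E) : Set C(X, E) :=
  {f | f ∈ A ∧ ‖f‖ = 1 ∧ f x ∈ K}

/-- The set `Θ(A)` of strong boundary points of a set `A` of functions in `C(X,E)`. -/
def strongBoundaryPoints (A : Set C(X, E)) : Set X :=
  {x | ∀ U ∈ nhds x, ∀ ε : ℝ, 0 < ε → ∀ u : E, ‖u‖ = 1 →
    ∃ f ∈ A, ‖f‖ = 1 ∧ f x = u ∧ ∀ y, y ∉ U → ‖f y‖ < ε}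

/-- The set `Ω(A)` of Bishop points of `A`: points `x` such that for every unit
vector `u` and every `f ∈ A` with `f x = 0` one has `f = s • (g - h)` for some
`s > 0` and `g, h ∈ V^A_{x,{u}}`. -/
def bishopPoints (A : Subspace 𝕂 C(X, E)) : Set X :=
  {x | ∀ u : E, ‖u‖ = 1 → ∀ f ∈ A, f x = 0 →
    ∃ s : ℝ, 0 < s ∧ ∃ g ∈ Vset A x {u}, ∃ h ∈ Vset A x {u}, f = s • (g - h)}

theorem norm_tsum_smul_le_tsum_sub {ι V : Type*} [NormedAddCommGroup V] [NormedSpace ℝ V]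
    {w : ι → ℝ} (hw0 : ∀ i, 0 ≤ w i) (hw : Summable w) {v : ι → V} (hv : ∀ i, ‖v i‖ ≤ 1)
    (j : ι) : ‖∑' i, w i • v i‖ ≤ ∑' i, w i - w j * (1 - ‖v j‖) := by
  classical
  have hnorm : ∀ i, ‖w i • v i‖ = w i * ‖v i‖ := fun i => by
    rw [norm_smul, Real.norm_of_nonneg (hw0 i)]
  have hle : ∀ i, w i * ‖v i‖ ≤ w i := fun i => mul_le_of_le_one_right (hw0 i) (hv i)
  have hsum : Summable fun i => w i * ‖v i‖ :=
    hw.of_nonneg_of_le (fun i => mul_nonneg (hw0 i) (norm_nonneg _)) hle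
  set d : ι → ℝ := Pi.single j (w j * (1 - ‖v j‖))
  have hd : Summable d := (hasSum_pi_single j _).summable
  have hbound : ∀ i, w i * ‖v i‖ ≤ w i - d i := by
    intro i
    rcases eq_or_ne i j with rfl | hij
    · simp only [d, Pi.single_eq_same]
      linarith
    · simp only [d, Pi.single_eq_of_ne hij, sub_zero]
      exact hle i
  calc ‖∑' i, w i • v i‖ ≤ ∑' i, ‖w i • v i‖ :=
        norm_tsum_le_tsum_norm (by simpa only [hnorm] using hsum)
    _ = ∑' i, w i * ‖v i‖ := tsum_congr hnorm
    _ ≤ ∑' i, (w i - d i) := hsum.tsum_le_tsum hbound (hw.sub hd)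
    _ = ∑' i, w i - w j * (1 - ‖v j‖) := by rw [hw.tsum_sub hd, tsum_pi_single]

theorem ContinuousMap.norm_eq_of_le_of_apply_eq {Y F : Type*} [TopologicalSpace Y]
    [CompactSpace Y] [SeminormedAddCommGroup F] {f : C(Y, F)} {C : ℝ} (hf : ∀ y, ‖f y‖ ≤ C)
    {x : Y} (hx : ‖f x‖ = C) : ‖f‖ = C :=
  le_antisymm ((f.norm_le (hx ▸ norm_nonneg _)).2 hf) (hx ▸ f.norm_coe_le_norm x)

theorem mem_Vset_singleton {𝕂 X E : Type*} [RCLike 𝕂] [TopologicalSpace X] [CompactSpace X]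
    [NormedAddCommGroup E] [NormedSpace 𝕂 E] {A : Subspace 𝕂 C(X, E)} {x : X} {u : E}
    (hu : ‖u‖ = 1) {g : C(X, E)} (hgA : g ∈ A) (hgx : g x = u) (hg : ∀ y, ‖g y‖ ≤ 1) :
    g ∈ Vset A x {u} :=
  ⟨hgA, g.norm_eq_of_le_of_apply_eq hg (hgx ▸ hu), hgx⟩

theorem exists_mem_apply_eq_norm_add_le_one {X E : Type*} [TopologicalSpace X] [CompactSpace X]
    [NormedAddCommGroup E] [NormedSpace ℝ E] [CompleteSpace E] {A : Submodule ℝ C(X, E)}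
    (hA : IsClosed (A : Set C(X, E))) {x : X} (hx : x ∈ strongBoundaryPoints (A : Set C(X, E)))
    {u : E} (hu : ‖u‖ = 1) {φ : X → ℝ} (hφ : Continuous φ) (hφx : φ x = 0)
    (hφ1 : ∀ y, φ y ≤ 1) :
    ∃ g ∈ A, g x = u ∧ ∀ y, ‖g y‖ + φ y / 4 ≤ 1 := by
  set w : ℕ → ℝ := fun n => (1 / 2) ^ (n + 1)
  have hw : HasSum w 1 := by
    simpa [w, pow_succ, div_eq_mul_inv, mul_comm] using hasSum_geometric_two' 1
  have hpeak : ∀ n, ∃ G ∈ (A : Set C(X, E)), ‖G‖ = 1 ∧ G x = u ∧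
      ∀ y, w n ≤ φ y → ‖G y‖ < 1 / 2 := by
    intro n
    have hU : {y | φ y < w n} ∈ nhds x :=
      (isOpen_lt hφ continuous_const).mem_nhds (by simp only [mem_ofPred_eq, hφx, w]; positivity)
    obtain ⟨G, hGA, hGn, hGx, hG⟩ := hx _ hU (1 / 2) (by norm_num) u hu
    exact ⟨G, hGA, hGn, hGx, fun y hy => hG y (not_lt.2 hy)⟩
  choose G hGA hGn hGx hG using hpeak
  have hGle : ∀ n y, ‖G n y‖ ≤ 1 := fun n y => hGn n ▸ (G n).norm_coe_le_norm y
  have hsum : Summable fun n => w n • G n := hw.summable.of_norm_bounded fun n => by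
    rw [norm_smul, hGn, mul_one, Real.norm_of_nonneg (by positivity)]
  refine ⟨∑' n, w n • G n, tsum_mem hA fun n => A.smul_mem _ (hGA n), ?_, fun y => ?_⟩
  · simp only [← ContinuousMap.tsum_apply hsum, ContinuousMap.smul_apply, hGx]
    rw [hw.summable.tsum_smul_const, hw.tsum_eq, one_smul]
  have hbound : ∀ m, ‖∑' n, w n • G n y‖ ≤ 1 - w m * (1 - ‖G m y‖) := fun m => by
    simpa only [hw.tsum_eq] using
      norm_tsum_smul_le_tsum_sub (fun n => by positivity) hw.summable (hGle · y) m
  simp only [← ContinuousMap.tsum_apply hsum, ContinuousMap.smul_apply]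
  rcases le_or_gt (φ y) 0 with hy | hy
  · nlinarith [hbound 0, hGle 0 y, show 0 < w 0 by positivity]
  obtain ⟨m, hm, hm'⟩ :=
    exists_nat_pow_near_of_lt_one hy (hφ1 y) (by norm_num : (0 : ℝ) < 1 / 2) (by norm_num)
  have hGm := hG m y hm.le
  have hwm : w m = (1 / 2) ^ m / 2 := by simp only [w]; ring
  nlinarith [hbound m, show 0 < w m by positivity]

/-- Every strong boundary point of a closed subspace `A` is a Bishop point:
`Θ(A) ⊆ Ω(A)`. -/
theorem stmt6 (A : Subspace 𝕂 C(X, E)) (hA : IsClosed (A : Set C(X, E))) :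
    strongBoundaryPoints (A : Set C(X, E)) ⊆ bishopPoints A := by
  intro x hx u hu f hfA hfx
  set s : ℝ := 4 * (‖f‖ + 1)
  have hs : 0 < s := by positivity
  have hφ1 : ∀ y, ‖f y‖ / (‖f‖ + 1) ≤ 1 := fun y =>
    div_le_one_of_le₀ ((f.norm_coe_le_norm y).trans (le_add_of_nonneg_right zero_le_one))
      (by positivity)
  obtain ⟨g, hgA, hgx, hg⟩ := exists_mem_apply_eq_norm_add_le_one (A := A.restrictScalars ℝ)
    hA hx hu (φ := fun y => ‖f y‖ / (‖f‖ + 1)) (by fun_prop) (by simp [hfx]) hφ1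
  have hfs : ∀ y, ‖(s⁻¹ • f) y‖ = ‖f y‖ / (‖f‖ + 1) / 4 := fun y => by
    rw [ContinuousMap.smul_apply, norm_smul, Real.norm_of_nonneg (by positivity), inv_mul_eq_div,
      div_div, mul_comm]
  refine ⟨s, hs, g, mem_Vset_singleton hu hgA hgx fun y => ?_, g - s⁻¹ • f,
    mem_Vset_singleton hu (A.sub_mem hgA (A.smul_of_tower_mem _ hfA)) (by simp [hfx, hgx])
      fun y => ?_, by rw [sub_sub_cancel, smul_inv_smul₀ hs.ne']⟩
  · linarith [hg y, show 0 ≤ ‖f y‖ / (‖f‖ + 1) / 4 by positivity]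
  · calc ‖(g - s⁻¹ • f) y‖ ≤ ‖g y‖ + ‖(s⁻¹ • f) y‖ := norm_sub_le _ _
      _ ≤ 1 := hfs y ▸ hg y
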